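/- arXiv:2308.16143 — 2 statements merged into one kernel-verified Lean document; each statement's English description precedes it below -/
import Mathlib

section
/- Fix integers c, d, n with n ≥ 1, and positive integers r_0, l_0, t with l_0 dividing n. Consider the system of congruences l_0·[(s_1+⋯+s_t)·r_0·(2c+d) − s_i·d] ≡ 0 (mod n) for i = 1,…,t, in unknowns s_1,…,s_t ∈ Z. If d = 1 (the Kazhdan–Patterson case) and additionally l_0 divides r_0·t and gcd(l_0, 2c·r_0·t + r_0·t − 1) = 1, then the solution set is exactly { (s_1,…,s_t) : s_i = k_i·(n/l_0) + k·(2c+1)·n/gcd(n, 2r·c + r − 1) for some integers k, k_1,…,k_t }, where r = r_0·t. -/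
/-!
After cancelling `l₀`, the `i`-th congruence says `sᵢ ≡ S·r₀(2c+1) (mod a)` with `a = n/l₀` and
`S = ∑ sⱼ`. Summing them shows that the system says exactly: all `sᵢ` are congruent mod `a` to one
`v` with `a ∣ v·m`, where `m = r(2c+1) − 1`. As `l₀` is prime to `m`, `gcd(a, m) = gcd(n, m) = g`,
so the last condition is `a/g ∣ v`; and as `(2c+1)·l₀` is a unit mod `g`, the multiples of `a/g`
modulo `a` are exactly the `k(2c+1)·n/g`, because `n/g = l₀·(a/g)`.
-/

open Finset

theorem forall_dvd_sum_mul_sub_iff {R ι : Type*} [CommRing R] [Fintype ι] (a q : R) (s : ι → R) :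
    (∀ i, a ∣ (∑ j, s j) * q - s i) ↔
      ∃ v, (∀ i, a ∣ s i - v) ∧ a ∣ v * (Fintype.card ι * q - 1) := by
  constructor
  · intro h
    have hS : a ∣ (∑ j, s j) * (Fintype.card ι * q - 1) := by
      convert dvd_sum (s := univ) fun i _ => h i using 1
      rw [sum_sub_distrib, sum_const, card_univ, nsmul_eq_mul]
      ring
    refine ⟨(∑ j, s j) * q, fun i => dvd_sub_comm.mp (h i), ?_⟩
    rw [mul_right_comm]
    exact hS.mul_right q
  · rintro ⟨v, hv, hvm⟩ i
    have key : (∑ j, s j) * q - s i =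
        q * ∑ j, (s j - v) + v * (Fintype.card ι * q - 1) - (s i - v) := by
      rw [sum_sub_distrib, sum_const, card_univ, nsmul_eq_mul]; ring
    rw [key]
    exact ((dvd_sum fun j _ => hv j).mul_left q |>.add hvm).sub (hv i)

theorem dvd_mul_iff_ediv_gcd_dvd {a m v : ℤ} (h : Int.gcd a m ≠ 0) :
    a ∣ v * m ↔ a / Int.gcd a m ∣ v := by
  have ha : a / Int.gcd a m * Int.gcd a m = a := Int.ediv_mul_cancel (Int.gcd_dvd_left a m)
  calc a ∣ v * m ↔ a ∣ v * Int.gcd a m := by rw [Int.coe_gcd, dvd_mul_gcd_iff_dvd_mul]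
    _ ↔ a / Int.gcd a m * Int.gcd a m ∣ v * Int.gcd a m := by rw [ha]
    _ ↔ a / Int.gcd a m ∣ v := mul_dvd_mul_iff_right (by exact_mod_cast h)

theorem exists_forall_dvd_sub_and_dvd_iff {R ι : Type*} [CommRing R] {g a u : R}
    (hu : IsCoprime u g) (s : ι → R) :
    (∃ v, (∀ i, g * a ∣ s i - v) ∧ a ∣ v) ↔
      ∃ (k : R) (ki : ι → R), ∀ i, s i = ki i * (g * a) + k * u * a := by
  constructor
  · rintro ⟨_, hv, w, rfl⟩
    choose e he using hv
    obtain ⟨x, y, hxy⟩ := hu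
    refine ⟨w * x, fun i => e i + w * y, fun i => ?_⟩
    linear_combination he i - a * w * hxy
  · rintro ⟨k, ki, hs⟩
    exact ⟨k * u * a, fun i => ⟨ki i, by rw [hs i]; ring⟩, ⟨k * u, by ring⟩⟩

theorem stmt4_general (c : ℤ) (n r0 l0 t : ℕ) (hn : 0 < n) (hl0 : 0 < l0)
    (hdvd : l0 ∣ n)
    (hcop : IsCoprime (l0 : ℤ) (2 * c * ((r0 : ℤ) * t) + (r0 : ℤ) * t - 1))
    (s : Fin t → ℤ) :
    (∀ i, (n : ℤ) ∣ (l0 : ℤ) * ((∑ j, s j) * r0 * (2 * c + 1) - s i)) ↔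
      (∃ (k : ℤ) (ki : Fin t → ℤ), ∀ i,
        s i = ki i * ((n / l0 : ℕ) : ℤ) + k * (2 * c + 1) *
          ((n / Int.gcd (n : ℤ) (2 * ((r0 : ℤ) * t) * c + (r0 : ℤ) * t - 1) : ℕ) : ℤ)) := by
  set m : ℤ := 2 * ((r0 : ℤ) * t) * c + (r0 : ℤ) * t - 1 with hm
  replace hcop : IsCoprime (l0 : ℤ) m := by convert hcop using 1; ring
  have hna : (n : ℤ) = l0 * ((n / l0 : ℕ) : ℤ) := by
    exact_mod_cast (Nat.mul_div_cancel' hdvd).symm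
  set a : ℤ := ((n / l0 : ℕ) : ℤ)
  have hgcd : Int.gcd a m = Int.gcd n m := by
    rw [hna, Int.gcd_mul_right_left_of_gcd_eq_one (Int.isCoprime_iff_gcd_eq_one.mp hcop)]
  set g : ℕ := Int.gcd n m
  have hg : g ≠ 0 := Int.gcd_ne_zero_left (by exact_mod_cast hn.ne')
  have ha : a = g * (a / g) := (Int.mul_ediv_cancel' (hgcd ▸ Int.gcd_dvd_left a m)).symm
  have hb : ((n / g : ℕ) : ℤ) = l0 * (a / g) := by
    rw [Int.natCast_div, hna, Int.mul_ediv_assoc _ (hgcd ▸ Int.gcd_dvd_left a m)]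
  have hu : IsCoprime ((2 * c + 1) * l0) (g : ℤ) := by
    have h2c1 : IsCoprime (2 * c + 1) m := ⟨r0 * t, -1, by rw [hm]; ring⟩
    exact (h2c1.mul_left hcop).of_isCoprime_of_dvd_right (Int.gcd_dvd_right n m)
  calc (∀ i, (n : ℤ) ∣ (l0 : ℤ) * ((∑ j, s j) * r0 * (2 * c + 1) - s i))
      ↔ ∀ i, a ∣ (∑ j, s j) * (r0 * (2 * c + 1)) - s i := by
        simp only [hna, mul_dvd_mul_iff_left (show (l0 : ℤ) ≠ 0 by positivity), mul_assoc]
    _ ↔ ∃ v, (∀ i, a ∣ s i - v) ∧ a ∣ v * m := by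
        rw [forall_dvd_sum_mul_sub_iff, Fintype.card_fin,
          show (t : ℤ) * (r0 * (2 * c + 1)) - 1 = m by rw [hm]; ring]
    _ ↔ ∃ v, (∀ i, g * (a / g) ∣ s i - v) ∧ a / g ∣ v := by
        rw [← ha, ← hgcd]
        simp only [dvd_mul_iff_ediv_gcd_dvd (hgcd ▸ hg)]
    _ ↔ _ := by
        rw [exists_forall_dvd_sub_and_dvd_iff hu, hb, ← ha]
        simp only [mul_assoc]

/-- Solution of the congruence system for a Kazhdan–Patterson cover (`d = 1`).
For integers `c` and positive integers `n, r₀, l₀, t` with `l₀ ∣ n`, `l₀ ∣ r₀·t` and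
`gcd(l₀, 2c·r₀t + r₀t − 1) = 1`, a tuple `(s₁,…,s_t) ∈ ℤ^t` satisfies
`l₀·[(s₁+⋯+s_t)·r₀·(2c+1) − sᵢ] ≡ 0 (mod n)` for all `i` if and only if there are integers
`k, k₁, …, k_t` with `sᵢ = kᵢ·(n/l₀) + k·(2c+1)·(n / gcd(n, 2rc + r − 1))`, where `r = r₀·t`. -/
theorem stmt4 (c : ℤ) (n r0 l0 t : ℕ) (hn : 0 < n) (hr0 : 0 < r0) (hl0 : 0 < l0)
    (ht : 0 < t) (hdvd : l0 ∣ n) (hdvd2 : l0 ∣ r0 * t)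
    (hcop : IsCoprime (l0 : ℤ) (2 * c * ((r0 : ℤ) * t) + (r0 : ℤ) * t - 1))
    (s : Fin t → ℤ) :
    (∀ i, (n : ℤ) ∣ (l0 : ℤ) * ((∑ j, s j) * r0 * (2 * c + 1) - s i)) ↔
      (∃ (k : ℤ) (ki : Fin t → ℤ), ∀ i,
        s i = ki i * ((n / l0 : ℕ) : ℤ) + k * (2 * c + 1) *
          ((n / Int.gcd (n : ℤ) (2 * ((r0 : ℤ) * t) * c + (r0 : ℤ) * t - 1) : ℕ) : ℤ)) :=
  stmt4_general c n r0 l0 t hn hl0 hdvd hcop s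
end

section
/- Let G be a group with subgroups satisfying an Iwahori-type factorization: J = (J ∩ N⁻)·(J ∩ M)·(J ∩ N) with uniqueness of the decomposition, and let w ∈ G normalize M with J^w also admitting the factorization J = (J ∩ N⁻ʷ)·(J ∩ M)·(J ∩ Nʷ), where conjugation by w preserves M componentwise. Let ρ be a representation of a group J̃ ⊇ J trivial on the subgroups corresponding to J∩N, J∩N⁻ and their w-conjugates. If Φ is a nonzero homomorphism intertwining ρ and ρ^w on the M-part, then Φ intertwines ρ and ρ^w on all of J ∩ J^w; consequently Hom_{J ∩ J^w}(ρ, ρ^w) = Hom_{J_M ∩ J_M^w}(ρ, ρ^w) where J_M = J ∩ M. -/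
/-! The unipotent factors of `g = u'·m·u` act trivially under both `ρ` and `ρ^w`, so `ρ g = ρ m`
and `ρ (w g w⁻¹) = ρ (w m w⁻¹)`; intertwining on `m ∈ J ∩ M` therefore gives it on `g`. -/

theorem MonoidHom.map_mul_mul_eq_of_map_eq_one {G H : Type*} [Monoid G] [Monoid H] (f : G →* H)
    {a b c : G} (ha : f a = 1) (hc : f c = 1) : f (a * b * c) = f b := by
  simp only [map_mul, ha, hc, one_mul, mul_one]

theorem MonoidHom.map_conj_mul_mul_eq_of_map_conj_eq_one {G H : Type*} [Group G] [Monoid H]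
    (f : G →* H) (w : G) {a b c : G} (ha : f (w * a * w⁻¹) = 1) (hc : f (w * c * w⁻¹) = 1) :
    f (w * (a * b * c) * w⁻¹) = f (w * b * w⁻¹) := by
  rw [← conj_mul, ← conj_mul]
  exact f.map_mul_mul_eq_of_map_eq_one ha hc

theorem stmt19_general (G : Type*) [Group G] (M N N' J : Subgroup G) (w : G)
    (V : Type*) [AddCommGroup V] [Module ℂ V]
    (ρ : G →* (V →ₗ[ℂ] V))
    (htrivN : ∀ x : G, x ∈ J → x ∈ N → ρ x = LinearMap.id)
    (htrivN' : ∀ x : G, x ∈ J → x ∈ N' → ρ x = LinearMap.id)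
    (htrivNw : ∀ x : G, x ∈ J → x ∈ N → ρ (w * x * w⁻¹) = LinearMap.id)
    (htrivN'w : ∀ x : G, x ∈ J → x ∈ N' → ρ (w * x * w⁻¹) = LinearMap.id)
    (hdec : ∀ g : G, g ∈ J → w * g * w⁻¹ ∈ J →
      ∃ u' m u : G, u' ∈ J ∧ u' ∈ N' ∧ m ∈ J ∧ m ∈ M ∧ u ∈ J ∧ u ∈ N ∧
        g = u' * m * u ∧ w * u' * w⁻¹ ∈ J ∧ w * m * w⁻¹ ∈ J ∧ w * u * w⁻¹ ∈ J) :
    {Φ : V →ₗ[ℂ] V | ∀ x : G, x ∈ J → w * x * w⁻¹ ∈ J →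
        Φ ∘ₗ ρ x = ρ (w * x * w⁻¹) ∘ₗ Φ} =
    {Φ : V →ₗ[ℂ] V | ∀ x : G, x ∈ J → x ∈ M → w * x * w⁻¹ ∈ J →
        Φ ∘ₗ ρ x = ρ (w * x * w⁻¹) ∘ₗ Φ} := by
  ext Φ
  refine ⟨fun hΦ x hxJ _ hxw => hΦ x hxJ hxw, fun hΦ g hgJ hgw => ?_⟩
  obtain ⟨u', m, u, hu'J, hu'N', hmJ, hmM, huJ, huN, rfl, -, hmw, -⟩ := hdec g hgJ hgw
  have hρ : ρ (u' * m * u) = ρ m :=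
    ρ.map_mul_mul_eq_of_map_eq_one (htrivN' u' hu'J hu'N') (htrivN u huJ huN)
  have hρw : ρ (w * (u' * m * u) * w⁻¹) = ρ (w * m * w⁻¹) :=
    ρ.map_conj_mul_mul_eq_of_map_conj_eq_one w (htrivN'w u' hu'J hu'N') (htrivNw u huJ huN)
  rw [hρ, hρw]
  exact hΦ m hmJ hmM hmw

/-- Let `G` be a group with subgroups `M, N, N⁻, J`, and `w ∈ G` normalizing
`M`.  Suppose `J` has an exact Iwahori factorization with respect to `(N⁻, M, N)`:
every `g ∈ J ∩ J^w` can be written `g = u'·m·u` with `u' ∈ J∩N⁻`, `m ∈ J∩M`, `u ∈ J∩N`,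
whose components have `w`-conjugates back in `J`.  Let `ρ` be a representation trivial on
`J∩N`, `J∩N⁻` and on their `w`-conjugates.  Then a linear map intertwining `ρ` with `ρ^w`
on the `M`-part intertwines them on all of `J ∩ J^w`; consequently
`Hom_{J∩J^w}(ρ, ρ^w) = Hom_{J_M ∩ J_M^w}(ρ, ρ^w)`. -/
theorem stmt19 (G : Type*) [Group G] (M N N' J : Subgroup G) (w : G)
    (V : Type*) [AddCommGroup V] [Module ℂ V]
    (ρ : G →* (V →ₗ[ℂ] V))
    (hnormM : ∀ x ∈ M, w * x * w⁻¹ ∈ M)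
    (htrivN : ∀ x : G, x ∈ J → x ∈ N → ρ x = LinearMap.id)
    (htrivN' : ∀ x : G, x ∈ J → x ∈ N' → ρ x = LinearMap.id)
    (htrivNw : ∀ x : G, x ∈ J → x ∈ N → ρ (w * x * w⁻¹) = LinearMap.id)
    (htrivN'w : ∀ x : G, x ∈ J → x ∈ N' → ρ (w * x * w⁻¹) = LinearMap.id)
    (hdec : ∀ g : G, g ∈ J → w * g * w⁻¹ ∈ J →
      ∃ u' m u : G, u' ∈ J ∧ u' ∈ N' ∧ m ∈ J ∧ m ∈ M ∧ u ∈ J ∧ u ∈ N ∧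
        g = u' * m * u ∧ w * u' * w⁻¹ ∈ J ∧ w * m * w⁻¹ ∈ J ∧ w * u * w⁻¹ ∈ J) :
    {Φ : V →ₗ[ℂ] V | ∀ x : G, x ∈ J → w * x * w⁻¹ ∈ J →
        Φ ∘ₗ ρ x = ρ (w * x * w⁻¹) ∘ₗ Φ} =
    {Φ : V →ₗ[ℂ] V | ∀ x : G, x ∈ J → x ∈ M → w * x * w⁻¹ ∈ J →
        Φ ∘ₗ ρ x = ρ (w * x * w⁻¹) ∘ₗ Φ} :=
  stmt19_general G M N N' J w V ρ htrivN htrivN' htrivNw htrivN'w hdec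
end
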